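/- arXiv:1306.5429 — 2 statements merged into one kernel-verified Lean document; each statement's English description precedes it below -/
import Mathlib

section
/- With b_n and B_n as above, for every n ≥ 1 the identity B_n(x) + b_n/(6x+1) = −(B_n(x) + b_n/(6x−1)) + (12(x+n)(x−1)(6x−7)/((x+n−1)(6x+1)(6x−1)))·(B_n(x−1) + b_n/(6x−7)) + 18(6n+1)·(2(x+n)/(x+n−1))·(B_{n−1}(x) + b_{n−1}/(6x+1)) holds in ℚ(x). -/
open Polynomial

/-- The odd double factorial: `oddFac k = (2k+1)!! = 1·3·5···(2k+1)`. -/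
def oddFac (k : ℕ) : ℕ := ∏ i ∈ Finset.range (k+1), (2*i+1)

/-- `bSeq n = 2^n·(6n+1)!!/(2n)!` as a rational number. -/
def bSeq (n : ℕ) : ℚ := 2^n * oddFac (3*n) / (2*n).factorial

/-- The falling factorial `(p)_{[j]} = p(p-1)···(p-j+1)` of a polynomial `p`, with
`(p)_{[0]} = 1`. -/
noncomputable def ff (p : Polynomial ℚ) (j : ℕ) : Polynomial ℚ :=
  ∏ i ∈ Finset.range j, (p - Polynomial.C (i : ℚ))

/-- The polynomial `B_n(x) = (1/6)·Σ_{j=1}^{n} 108^j·b_{n−j}·(x+n)_{[j−1]}`. -/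
noncomputable def Bpoly (n : ℕ) : Polynomial ℚ :=
  Polynomial.C (1/6 : ℚ) *
    ∑ j ∈ Finset.Icc 1 n,
      Polynomial.C ((108:ℚ)^j * bSeq (n-j)) * ff (Polynomial.X + Polynomial.C (n:ℚ)) (j-1)

noncomputable section

/-- The image of `B_n` in the field of rational functions `ℚ(x)`. -/
def Bf (n : ℕ) : RatFunc ℚ := algebraMap (Polynomial ℚ) (RatFunc ℚ) (Bpoly n)

/-- The image of `B_n(x+1)` in `ℚ(x)`. -/
def BfShiftUp (n : ℕ) : RatFunc ℚ :=
  algebraMap (Polynomial ℚ) (RatFunc ℚ) ((Bpoly n).comp (Polynomial.X + 1))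

/-- The image of `B_n(x-1)` in `ℚ(x)`. -/
def BfShiftDown (n : ℕ) : RatFunc ℚ :=
  algebraMap (Polynomial ℚ) (RatFunc ℚ) ((Bpoly n).comp (Polynomial.X - 1))

/-- The generator `x` of `ℚ(x)`. -/
def Xr : RatFunc ℚ := RatFunc.X

/-- Constant rational functions. -/
def cst (a : ℚ) : RatFunc ℚ := RatFunc.C a

end

/-!
Put `S_n(y) = 6 B_n(y - n)`. Splitting off the term `j = 1` gives
`S_{n+1}(y) = 108 b_n + 108 y S_n(y - 1)`, and induction on `n`, using
`(n + 1) b_{n+1} = 3 (6n + 5)(6n + 7) b_n`, gives the first-order difference equation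
`(6y - 6n + 1)(6y - 6n - 1) S_n(y) - 36 y (y - n - 1) S_n(y - 1) = 36 n b_n`.
Back in the variable `x` these read `B_{n+1}(x) = 18 b_n + 108 (x + n + 1) B_n(x)` and
`(36x² - 1) B_n(x) - 36 (x - 1)(x + n) B_n(x - 1) = 6 n b_n`; once denominators are cleared,
the identity is a linear combination of these two relations and the recursion for `b_n`.
-/
lemma oddFac_succ (k : ℕ) : oddFac (k + 1) = oddFac k * (2 * k + 3) := by
  rw [oddFac, Finset.prod_range_succ]; rfl

lemma succ_mul_bSeq_succ (n : ℕ) :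
    ((n : ℚ) + 1) * bSeq (n + 1) = 3 * (6 * n + 7) * (6 * n + 5) * bSeq n := by
  have h_oddFac :
      oddFac (3 * (n + 1)) = oddFac (3 * n) * (6 * n + 3) * (6 * n + 5) * (6 * n + 7) := by
    rw [show 3 * (n + 1) = 3 * n + 1 + 1 + 1 by ring, oddFac_succ, oddFac_succ, oddFac_succ]
    ring
  have h_fact : (2 * (n + 1)).factorial = (2 * n + 2) * ((2 * n + 1) * (2 * n).factorial) := by
    rw [show 2 * (n + 1) = 2 * n + 1 + 1 by ring, Nat.factorial_succ, Nat.factorial_succ]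
  have : ((2 * n).factorial : ℚ) ≠ 0 := by positivity
  simp only [bSeq, h_oddFac, h_fact]
  push_cast
  field_simp
  ring

/-- `6 B_n(y - n)`: in the variable `y = x + n` the recursion in `n` is a plain shift. -/
noncomputable def Spoly (n : ℕ) : ℚ[X] :=
  ∑ i ∈ Finset.range n, C (108 ^ (i + 1) * bSeq (n - 1 - i)) * ff X i

lemma Finset.sum_Icc_one_eq_sum_range {M : Type*} [AddCommMonoid M] (f : ℕ → M) (n : ℕ) :
    ∑ j ∈ Finset.Icc 1 n, f j = ∑ i ∈ Finset.range n, f (i + 1) := by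
  rw [Finset.range_eq_Ico, Finset.sum_Ico_add', ← Finset.Ico_add_one_right_eq_Icc]

lemma ff_X_comp (q : ℚ[X]) (j : ℕ) : (ff X j).comp q = ff q j := by
  simp [ff, prod_comp]

lemma ff_X_succ (k : ℕ) : ff X (k + 1) = X * ff (X - 1) k := by
  rw [ff, Finset.prod_range_succ', ff]
  simp only [Nat.cast_add, Nat.cast_one, map_add, map_one, Nat.cast_zero, map_zero, sub_zero]
  rw [mul_comm]
  congr 1
  exact Finset.prod_congr rfl fun i _ => by ring

lemma Spoly_succ (n : ℕ) :
    Spoly (n + 1) = 108 * C (bSeq n) + 108 * X * (Spoly n).comp (X - 1) := by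
  rw [Spoly, Finset.sum_range_succ', add_comm, Spoly, sum_comp, Finset.mul_sum]
  congr 1
  · simp [ff, map_ofNat]
  · refine Finset.sum_congr rfl fun i _ => ?_
    rw [mul_comp, C_comp, ff_X_comp, ff_X_succ, show n + 1 - 1 - (i + 1) = n - 1 - i by omega]
    simp only [pow_succ', map_mul, map_ofNat]
    ring

lemma Spoly_difference_eq (n : ℕ) :
    (6 * X - (6 * (n : ℚ[X]) - 1)) * (6 * X - (6 * (n : ℚ[X]) + 1)) * Spoly n
      - 36 * (X - ((n : ℚ[X]) + 1)) * X * (Spoly n).comp (X - 1)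
    = 36 * (n : ℚ[X]) * C (bSeq n) := by
  induction n with
  | zero => simp [Spoly]
  | succ n ih =>
    have ih_shift := congrArg (·.comp (X - 1)) ih
    simp only [sub_comp, add_comp, mul_comp, X_comp, C_comp, natCast_comp, ofNat_comp,
      one_comp] at ih_shift
    have hb := congrArg C (succ_mul_bSeq_succ n)
    simp only [map_mul, map_add, map_ofNat, map_one, map_natCast] at hb
    rw [Spoly_succ n]
    simp only [add_comp, mul_comp, C_comp, X_comp, ofNat_comp]
    push_cast
    linear_combination (108 * X) * ih_shift - 36 * hb

lemma six_mul_Bpoly (n : ℕ) : 6 * Bpoly n = (Spoly n).comp (X + (n : ℚ[X])) := by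
  have h_six : (6 : ℚ[X]) * C (1 / 6) = 1 := by rw [← C_ofNat, ← C_mul]; norm_num
  rw [Bpoly, ← mul_assoc, h_six, one_mul, Finset.sum_Icc_one_eq_sum_range, Spoly, sum_comp]
  refine Finset.sum_congr rfl fun j _ => ?_
  rw [mul_comp, C_comp, ff_X_comp, C_eq_natCast, Nat.sub_sub, add_comm 1 j, Nat.add_sub_cancel]

lemma Bpoly_difference_eq (n : ℕ) :
    (6 * X + 1) * (6 * X - 1) * Bpoly n - 36 * (X - 1) * (X + (n : ℚ[X])) * (Bpoly n).comp (X - 1)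
      = 6 * (n : ℚ[X]) * C (bSeq n) := by
  have h_shift := congrArg (·.comp (X - 1)) (six_mul_Bpoly n)
  have h_diff := congrArg (·.comp (X + (n : ℚ[X]))) (Spoly_difference_eq n)
  simp only [mul_comp, sub_comp, add_comp, ofNat_comp, natCast_comp, one_comp, X_comp, C_comp,
    comp_assoc] at h_shift h_diff
  rw [show X - 1 + (n : ℚ[X]) = X + (n : ℚ[X]) - 1 by ring] at h_shift
  refine mul_left_cancel₀ (by norm_num : (6 : ℚ[X]) ≠ 0) ?_
  linear_combination h_diff + (6 * X + 1) * (6 * X - 1) * six_mul_Bpoly n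
    - 36 * (X - 1) * (X + (n : ℚ[X])) * h_shift

lemma Bpoly_succ (n : ℕ) :
    Bpoly (n + 1) = 18 * C (bSeq n) + 108 * (X + (n : ℚ[X]) + 1) * Bpoly n := by
  have h := six_mul_Bpoly (n + 1)
  rw [Spoly_succ] at h
  simp only [add_comp, mul_comp, C_comp, X_comp, ofNat_comp, comp_assoc, sub_comp, one_comp] at h
  push_cast at h
  rw [show X + ((n : ℚ[X]) + 1) - 1 = X + (n : ℚ[X]) by ring] at h
  refine mul_left_cancel₀ (by norm_num : (6 : ℚ[X]) ≠ 0) ?_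
  linear_combination h - 108 * (X + (n : ℚ[X]) + 1) * six_mul_Bpoly n

lemma Bf_difference_eq (n : ℕ) :
    (6 * Xr + 1) * (6 * Xr - 1) * Bf n - 36 * (Xr - 1) * (Xr + n) * BfShiftDown n
      = 6 * n * cst (bSeq n) := by
  simpa [Bf, BfShiftDown, Xr, cst, map_ofNat] using
    congrArg (algebraMap ℚ[X] (RatFunc ℚ)) (Bpoly_difference_eq n)

lemma Bf_succ (n : ℕ) : Bf (n + 1) = 18 * cst (bSeq n) + 108 * (Xr + n + 1) * Bf n := by
  simpa [Bf, Xr, cst, map_ofNat] using congrArg (algebraMap ℚ[X] (RatFunc ℚ)) (Bpoly_succ n)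

lemma succ_mul_cst_bSeq_succ (n : ℕ) :
    ((n : RatFunc ℚ) + 1) * cst (bSeq (n + 1))
      = 3 * (6 * n + 7) * (6 * n + 5) * cst (bSeq n) := by
  simpa [cst] using congrArg RatFunc.C (succ_mul_bSeq_succ n)

lemma C_mul_Xr_add_C_ne_zero {a : ℚ} (ha : a ≠ 0) (b : ℚ) : cst a * Xr + cst b ≠ 0 := by
  rw [cst, cst, Xr, ← RatFunc.algebraMap_X, ← RatFunc.algebraMap_C, ← RatFunc.algebraMap_C,
    ← map_mul, ← map_add]
  refine RatFunc.algebraMap_ne_zero fun h => ha ?_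
  simpa using congrArg (coeff · 1) h

/-- The identity in `ℚ(x)`, for `n ≥ 1`:
`B_n(x) + b_n/(6x+1) = −(B_n(x) + b_n/(6x−1))
 + (12(x+n)(x−1)(6x−7)/((x+n−1)(6x+1)(6x−1)))·(B_n(x−1) + b_n/(6x−7))
 + 18(6n+1)·(2(x+n)/(x+n−1))·(B_{n−1}(x) + b_{n−1}/(6x+1))`. -/
theorem stmt6 (n : ℕ) (hn : 1 ≤ n) :
    Bf n + cst (bSeq n) / (6*Xr+1)
      = -(Bf n + cst (bSeq n) / (6*Xr-1))
        + (12 * (Xr + (n : RatFunc ℚ)) * (Xr - 1) * (6*Xr-7)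
            / ((Xr + (n : RatFunc ℚ) - 1) * (6*Xr+1) * (6*Xr-1)))
          * (BfShiftDown n + cst (bSeq n) / (6*Xr-7))
        + 18 * (6*(n : RatFunc ℚ) + 1) * (2 * (Xr + (n : RatFunc ℚ)) / (Xr + (n : RatFunc ℚ) - 1))
          * (Bf (n-1) + cst (bSeq (n-1)) / (6*Xr+1)) := by
  obtain ⟨m, rfl⟩ : ∃ m, n = m + 1 := ⟨n - 1, by omega⟩
  have h_diff := Bf_difference_eq (m + 1)
  have h_succ := Bf_succ m
  have h_bSeq := succ_mul_cst_bSeq_succ m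
  have h₁ : 6 * Xr + 1 ≠ 0 := by simpa [cst] using C_mul_Xr_add_C_ne_zero (a := 6) (by norm_num) 1
  have h₂ : 6 * Xr - 1 ≠ 0 := by
    simpa [cst, ← sub_eq_add_neg] using C_mul_Xr_add_C_ne_zero (a := 6) (by norm_num) (-1)
  have h₃ : 6 * Xr - 7 ≠ 0 := by
    simpa [cst, ← sub_eq_add_neg] using C_mul_Xr_add_C_ne_zero (a := 6) (by norm_num) (-7)
  have h₄ : Xr + m ≠ 0 := by simpa [cst] using C_mul_Xr_add_C_ne_zero (a := 1) one_ne_zero m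
  rw [Nat.add_sub_cancel]
  push_cast at h_diff ⊢
  rw [show Xr + ((m : RatFunc ℚ) + 1) - 1 = Xr + m by ring]
  field_simp
  linear_combination (6 * Xr - 7) / 3 * h_diff
    + (6 * (m : RatFunc ℚ) + 7) * (6 * Xr + 1) * (6 * Xr - 1) / 3 * h_succ
    + 2 * (6 * Xr - 1) * h_bSeq
end

section
/- With A_{m,n} as above (zero when an index is negative), the L_0 constraints hold: √−2·(−Σ_{i=0}^{2} A_{m,i}·A_{2−i,n} + A_{m+3,n} − A_{m,n+3}) − (1/4)·((2m+1) + (2n+1))·A_{m,n} = 0 for all m, n ≥ 0. -/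
/-- `B_n(x) = (1/6)·Σ_{j=1}^{n} 108^j·b_{n−j}·(x+n)_{[j−1]}`, as a function of `x`,
where `(a)_{[j]} = a(a−1)···(a−j+1)` is the falling factorial. -/
def Bval (n : ℕ) (x : ℚ) : ℚ :=
  (1/6 : ℚ) * ∑ j ∈ Finset.Icc 1 n,
    (108:ℚ)^j * bSeq (n-j) * ∏ i ∈ Finset.range (j-1), (x + n - i)

/-- The value `A_{3m−1,3n} = A_{3m−3,3n+2}`:
`(−1)^n·(−s/144)^{m+n}·((6m+1)!!/(2(m+n))!)·Π_{j=0}^{n−1}(m+j)·Π_{j=1}^{n}(2m+2j−1)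
  ·(B_n(m) + b_n/(6m+1))`, where `s` is a fixed square root of `−2`. -/
noncomputable def Fcoef (s : ℂ) (m n : ℕ) : ℂ :=
  (-1)^n * (-s/144)^(m+n) * ((oddFac (3*m) : ℂ) / ((2*(m+n)).factorial : ℂ))
    * (∏ j ∈ Finset.range n, ((m:ℂ) + j))
    * (∏ j ∈ Finset.range n, (2*(m:ℂ) + 2*((j:ℂ)+1) - 1))
    * ((Bval n m : ℂ) + (bSeq n : ℂ) / (6*(m:ℂ)+1))

/-- The value `A_{3m−2,3n+1}`:
`(−1)^{n+1}·(−s/144)^{m+n}·((6m+1)!!/(2(m+n))!)·Π_{j=0}^{n−1}(m+j)·Π_{j=1}^{n}(2m+2j−1)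
  ·(B_n(m) + b_n/(6m−1))`. -/
noncomputable def Gcoef (s : ℂ) (m n : ℕ) : ℂ :=
  (-1)^(n+1) * (-s/144)^(m+n) * ((oddFac (3*m) : ℂ) / ((2*(m+n)).factorial : ℂ))
    * (∏ j ∈ Finset.range n, ((m:ℂ) + j))
    * (∏ j ∈ Finset.range n, (2*(m:ℂ) + 2*((j:ℂ)+1) - 1))
    * ((Bval n m : ℂ) + (bSeq n : ℂ) / (6*(m:ℂ)-1))

/-- The coefficients `A_{p,q}` (`p, q ∈ ℤ`): zero if `p < 0` or `q < 0`, zero unless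
`p + q ≡ −1 (mod 3)`, and otherwise given by the closed formulas: writing
`(p,q) = (3m−1,3n)`, `(3m−3,3n+2)` or `(3m−2,3n+1)` with `m ≥ 1`, `n ≥ 0`,
`A_{3m−1,3n} = A_{3m−3,3n+2} = Fcoef s m n` and `A_{3m−2,3n+1} = Gcoef s m n`. -/
noncomputable def Acoef (s : ℂ) (p q : ℤ) : ℂ :=
  if p < 0 ∨ q < 0 then 0
  else if p % 3 = 2 ∧ q % 3 = 0 then Fcoef s ((p+1)/3).toNat (q/3).toNat
  else if p % 3 = 0 ∧ q % 3 = 2 then Fcoef s ((p/3).toNat + 1) ((q-2)/3).toNat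
  else if p % 3 = 1 ∧ q % 3 = 1 then Gcoef s ((p+2)/3).toNat ((q-1)/3).toNat
  else 0

lemma oddFac_zero : oddFac 0 = 1 := by simp [oddFac]
lemma oddFac_three : oddFac 3 = 105 := by decide
lemma bSeq_zero : bSeq 0 = 1 := by norm_num [bSeq, oddFac_zero]
lemma bSeq_one : bSeq 1 = 105 := by norm_num [bSeq, oddFac_three, Nat.factorial]
lemma oddFac_add3 (k : ℕ) : oddFac (k+3) = oddFac k * ((2*k+3)*(2*k+5)*(2*k+7)) := by
  simp [oddFac, Finset.prod_range_succ]; ring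
lemma bSeq_rec (n : ℕ) : ((n:ℚ)+1) * bSeq (n+1) = 3*(6*(n:ℚ)+7)*(6*(n:ℚ)+5) * bSeq n := by
  have hf : ((2*n).factorial : ℚ) ≠ 0 := Nat.cast_ne_zero.mpr (Nat.factorial_ne_zero _)
  rw [bSeq, bSeq, show 3*(n+1) = 3*n+3 by ring, oddFac_add3,
    show 2*(n+1) = (2*n+1)+1 by ring, Nat.factorial_succ, Nat.factorial_succ]
  push_cast
  field_simp
  ring
lemma Bval_zero (x : ℚ) : Bval 0 x = 0 := by simp [Bval]

lemma Bval_reindex (m : ℕ) (y : ℚ) : Bval m y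
    = (1/6 : ℚ) * ∑ i ∈ Finset.range m,
        (108:ℚ)^(i+1) * bSeq (m-(i+1)) * ∏ k ∈ Finset.range i, (y + m - k) := by
  rw [Bval, ← Finset.Ico_add_one_right_eq_Icc, Finset.sum_Ico_eq_sum_range]
  have hm : m + 1 - 1 = m := by omega
  rw [hm]
  refine congrArg _ (Finset.sum_congr rfl fun i _ => ?_)
  rw [add_comm 1 i]
  simp

lemma Bval_succ (n : ℕ) (x : ℚ) :
    Bval (n+1) x = 18 * bSeq n + 108 * (x + n + 1) * Bval n x := by
  rw [Bval_reindex (n+1) x, Bval_reindex n x, Finset.sum_range_succ']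
  have h1 : ∀ i ∈ Finset.range n,
      (108:ℚ)^(i+1+1) * bSeq (n+1-(i+1+1)) * ∏ k ∈ Finset.range (i+1), (x + ↑(n+1) - k)
      = 108 * (x + n + 1) * ((108:ℚ)^(i+1) * bSeq (n-(i+1)) * ∏ k ∈ Finset.range i, (x + n - k)) := by
    intro i _
    rw [Finset.prod_range_succ']
    have h2 : ∀ k ∈ Finset.range i, (x + ↑(n+1) - ↑(k+1)) = (x + n - k) := by
      intro k _; push_cast; ring
    rw [Finset.prod_congr rfl h2]
    have h3 : n+1-(i+1+1) = n-(i+1) := by omega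
    rw [h3]
    push_cast
    ring
  rw [Finset.sum_congr rfl h1, ← Finset.mul_sum]
  simp only [pow_one, Nat.add_sub_cancel, Finset.range_zero, Finset.prod_empty, mul_one]
  ring

lemma S35 (n : ℕ) : 35 * Bval n 1 = 6 * (n:ℚ) * bSeq n := by
  induction n with
  | zero => simp [Bval_zero]
  | succ N ih =>
    rw [Bval_succ]
    push_cast
    linear_combination 108*((N:ℚ)+2)*ih - 6*(bSeq_rec N)

lemma PF (n : ℕ) (x : ℚ) :
    -105*(x+n+1)*(6*x+7)*(7*Bval n 1 + bSeq n)
    + 21*((n:ℚ)+1)*(6*x+5)*(6*x+1)*(6*x+7)*((6*x+7)*Bval n (x+1) + bSeq n)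
    + 14*x*((n:ℚ)+1)*(6*x+1)*(6*x+7)*(9*bSeq n - 54*(x+(n:ℚ)+1)*Bval n x)
    + 7*x*((n:ℚ)+1)*(6*x+7)*(bSeq (n+1) - 216*(x+(n:ℚ)+1)*bSeq n) = 0 := by
  induction n generalizing x with
  | zero =>
    norm_num [Bval_zero, bSeq_zero, bSeq_one]
    ring
  | succ N ih =>
    have hN : ((N:ℚ)+1) ≠ 0 := by positivity
    refine mul_left_cancel₀ hN ?_
    rw [mul_zero]
    simp only [Bval_succ]
    have hb1 := bSeq_rec N
    have hb2 := bSeq_rec (N+1)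
    push_cast at hb2 ⊢
    linear_combination (108*((N:ℚ)+2)*(x+(N:ℚ)+2)) * ih x
      + (2268*x*((N:ℚ)+2)*(x+(N:ℚ)+2)*(6*x+7)) * S35 N
      + (21*(6*x+7)*(-5*(x+(N:ℚ)+2)+((N:ℚ)+2)*(6*x+1)*(12*x+5)-108*x*((N:ℚ)+2)*(x+(N:ℚ)+2)+x*(6*(N:ℚ)+13)*(6*(N:ℚ)+11))) * hb1
      + (7*x*(6*x+7)*((N:ℚ)+1)) * hb2

lemma PG (n : ℕ) (x : ℚ) :
    105*(x+n+1)*(6*x+5)*(5*Bval n 1 + bSeq n)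
    + 15*((n:ℚ)+1)*(6*x-1)*(6*x+7)*(6*x+5)*((6*x+5)*Bval n (x+1) + bSeq n)
    + 10*x*((n:ℚ)+1)*(6*x-1)*(6*x+5)*(9*bSeq n - 54*(x+(n:ℚ)+1)*Bval n x)
    + 5*x*((n:ℚ)+1)*(6*x+5)*(bSeq (n+1) - 216*(x+(n:ℚ)+1)*bSeq n) = 0 := by
  induction n generalizing x with
  | zero =>
    norm_num [Bval_zero, bSeq_zero, bSeq_one]
    ring
  | succ N ih =>
    have hN : ((N:ℚ)+1) ≠ 0 := by positivity
    refine mul_left_cancel₀ hN ?_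
    rw [mul_zero]
    simp only [Bval_succ]
    have hb1 := bSeq_rec N
    have hb2 := bSeq_rec (N+1)
    push_cast at hb2 ⊢
    linear_combination (108*((N:ℚ)+2)*(x+(N:ℚ)+2)) * ih x
      + (-1620*x*((N:ℚ)+2)*(x+(N:ℚ)+2)*(6*x+5)) * S35 N
      + (15*(6*x+5)*(7*(x+(N:ℚ)+2)+((N:ℚ)+2)*(6*x-1)*(6*x+7)+6*x*((N:ℚ)+2)*(6*x-1)-108*x*((N:ℚ)+2)*(x+(N:ℚ)+2)+x*(6*(N:ℚ)+13)*(6*(N:ℚ)+11))) * hb1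
      + (5*x*(6*x+5)*((N:ℚ)+1)) * hb2

noncomputable def pref (m n : ℕ) : ℚ :=
  (oddFac (3*m) : ℚ) / ((2*(m+n)).factorial : ℚ)
    * (∏ j ∈ Finset.range n, ((m:ℚ) + j)) * (∏ j ∈ Finset.range n, (2*(m:ℚ) + 2*((j:ℚ)+1) - 1))

noncomputable def fQ (m n : ℕ) : ℚ := pref m n * (Bval n m + bSeq n / (6*m+1))
noncomputable def gQ (m n : ℕ) : ℚ := pref m n * (Bval n m + bSeq n / (6*m-1))

lemma fac_ne (k : ℕ) : ((k.factorial : ℚ)) ≠ 0 := Nat.cast_ne_zero.mpr (Nat.factorial_ne_zero _)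

lemma pref_F1 (m n : ℕ) :
    pref m (n+1) * (2*((m:ℚ)+n+1)) = pref m n * ((m:ℚ)+n) := by
  rw [pref, pref, show 2*(m+(n+1)) = (2*(m+n)+1)+1 by ring, Nat.factorial_succ,
    Nat.factorial_succ, Finset.prod_range_succ, Finset.prod_range_succ]
  have h1 : ((2*(m+n)+1+1 : ℕ) : ℚ) ≠ 0 := by positivity
  have h2 : ((2*(m+n)+1 : ℕ) : ℚ) ≠ 0 := by positivity
  have h3 := fac_ne (2*(m+n))
  push_cast at h1 h2 ⊢
  field_simp
  ring

lemma pref_F2 (m n : ℕ) :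
    pref (m+1) n * (2*((m:ℚ)+n+1)*m*(2*m+1))
      = pref m n * (3*(2*(m:ℚ)+1)*(6*m+5)*(6*m+7)*((m:ℚ)+n)) := by
  induction n with
  | zero =>
    rw [pref, pref, show 3*(m+1) = 3*m+3 by ring, oddFac_add3,
      show 2*((m+1)+0) = (2*(m+0)+1)+1 by ring, Nat.factorial_succ, Nat.factorial_succ]
    have h1 : ((2*(m+0)+1+1 : ℕ) : ℚ) ≠ 0 := by positivity
    have h2 : ((2*(m+0)+1 : ℕ) : ℚ) ≠ 0 := by positivity
    have h3 := fac_ne (2*(m+0))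
    push_cast at h1 h2 ⊢
    field_simp
    ring
  | succ n ih =>
    have hk : (2*((m:ℚ)+n+1)) ≠ 0 := by positivity
    refine mul_left_cancel₀ hk ?_
    have E1 := pref_F1 (m+1) n
    have E2 := pref_F1 m n
    push_cast at E1 ⊢
    linear_combination (2*((m:ℚ)+n+1)*m*(2*(m:ℚ)+1)) * E1
      + (-3*(2*(m:ℚ)+1)*(6*(m:ℚ)+5)*(6*(m:ℚ)+7)*((m:ℚ)+n+1)) * E2
      + ((m:ℚ)+n+1) * ih

lemma pref_one_zero : pref 1 0 = 105/2 := by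
  rw [pref]
  norm_num [oddFac_three, Nat.factorial]

lemma pref_F3 (m n : ℕ) :
    pref m 0 * pref 1 n * (2*(m:ℚ)*(n+1)) = pref m n * (105*((m:ℚ)+n)) := by
  induction n with
  | zero => rw [pref_one_zero]; push_cast; ring
  | succ n ih =>
    have hk : (4*((n:ℚ)+2)*((m:ℚ)+n+1)) ≠ 0 := by positivity
    refine mul_left_cancel₀ hk ?_
    have E1 := pref_F1 1 n
    have E2 := pref_F1 m n
    push_cast at E1 ⊢
    linear_combination (pref m 0 * 4*(m:ℚ)*((n:ℚ)+2)*((m:ℚ)+n+1)) * E1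
      + (-210*((n:ℚ)+2)*((m:ℚ)+n+1)) * E2
      + (2*((n:ℚ)+2)*((m:ℚ)+n+1)) * ih

lemma fQ_A1 (m n : ℕ) : fQ m 0 * (6*(m:ℚ)+1) = pref m 0 := by
  have h : (6*(m:ℚ)+1) ≠ 0 := by positivity
  have e : (1:ℚ) / (6*(m:ℚ)+1) * (6*(m:ℚ)+1) = 1 := div_mul_cancel₀ _ h
  rw [fQ, Bval_zero, bSeq_zero]
  linear_combination pref m 0 * e

lemma fQ_A2 (n : ℕ) : fQ 1 n * 7 = pref 1 n * (7*Bval n 1 + bSeq n) := by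
  rw [fQ]
  norm_num
  ring

lemma fQ_A3 (m n : ℕ) : fQ (m+1) n * (6*(m:ℚ)+7)
    = pref (m+1) n * ((6*(m:ℚ)+7)*Bval n ((m:ℚ)+1) + bSeq n) := by
  have h : (6*((m:ℚ)+1)+1) ≠ 0 := by positivity
  have e : bSeq n / (6*((m:ℚ)+1)+1) * (6*((m:ℚ)+1)+1) = bSeq n := div_mul_cancel₀ _ h
  rw [fQ]
  push_cast
  linear_combination pref (m+1) n * e

lemma fQ_A0 (m n : ℕ) : fQ m n * (6*(m:ℚ)+1)
    = pref m n * ((6*(m:ℚ)+1)*Bval n (m:ℚ) + bSeq n) := by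
  have h : (6*(m:ℚ)+1) ≠ 0 := by positivity
  have e : bSeq n / (6*(m:ℚ)+1) * (6*(m:ℚ)+1) = bSeq n := div_mul_cancel₀ _ h
  rw [fQ]
  linear_combination pref m n * e

lemma IFq (m n : ℕ) :
    -fQ (m+1) 0 * fQ 1 n + fQ (m+2) n + fQ (m+1) (n+1)
      = 108*((m:ℚ)+1+n)*fQ (m+1) n := by
  have hW : (28*((m:ℚ)+1)*(2*((m:ℚ)+1)+1)*((n:ℚ)+1)*(((m:ℚ)+1)+n+1)*(6*((m:ℚ)+1)+1)*(6*((m:ℚ)+1)+7)) ≠ 0 := by positivity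
  refine mul_right_cancel₀ hW ?_
  have H1 : fQ (m+1) 0 * fQ 1 n * (14*((m:ℚ)+1)*((n:ℚ)+1)*(6*((m:ℚ)+1)+1))
      = pref (m+1) n * (105*(((m:ℚ)+1)+n)*(7*Bval n 1 + bSeq n)) := by
    have hA1 := fQ_A1 (m+1) 0
    have hF3 := pref_F3 (m+1) n
    push_cast at hA1 hF3
    linear_combination (fQ 1 n * 14*((m:ℚ)+1)*((n:ℚ)+1)) * hA1
      + (pref (m+1) 0 * 2*((m:ℚ)+1)*((n:ℚ)+1)) * fQ_A2 n
      + (7*Bval n 1 + bSeq n) * hF3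
  have H2 : fQ (m+2) n * (2*((m:ℚ)+1)*(((m:ℚ)+1)+n+1)*(2*((m:ℚ)+1)+1)*(6*((m:ℚ)+1)+7))
      = pref (m+1) n * (3*(2*((m:ℚ)+1)+1)*(6*((m:ℚ)+1)+5)*(6*((m:ℚ)+1)+7)*(((m:ℚ)+1)+n)
          *((6*((m:ℚ)+1)+7)*Bval n (((m:ℚ)+1)+1) + bSeq n)) := by
    have hA3 := fQ_A3 (m+1) n
    have hF2 := pref_F2 (m+1) n
    push_cast at hA3 hF2
    linear_combination (2*(((m:ℚ)+1)+n+1)*((m:ℚ)+1)*(2*((m:ℚ)+1)+1)) * hA3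
      + ((6*((m:ℚ)+1)+7)*Bval n (((m:ℚ)+1)+1) + bSeq n) * hF2
  have H3 : fQ (m+1) (n+1) * (2*(((m:ℚ)+1)+n+1)*(6*((m:ℚ)+1)+1))
      = pref (m+1) n * ((((m:ℚ)+1)+n)
          *((6*((m:ℚ)+1)+1)*(18*bSeq n + 108*(((m:ℚ)+1)+n+1)*Bval n ((m:ℚ)+1)) + bSeq (n+1))) := by
    have hA4 := fQ_A0 (m+1) (n+1)
    rw [Bval_succ] at hA4
    have hF1 := pref_F1 (m+1) n
    push_cast at hA4 hF1
    linear_combination (2*(((m:ℚ)+1)+n+1)) * hA4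
      + ((6*((m:ℚ)+1)+1)*(18*bSeq n + 108*(((m:ℚ)+1)+n+1)*Bval n ((m:ℚ)+1)) + bSeq (n+1)) * hF1
  have H0 := fQ_A0 (m+1) n
  have hPF := PF n ((m:ℚ)+1)
  push_cast at H0 ⊢
  linear_combination (-(2*(2*((m:ℚ)+1)+1)*(((m:ℚ)+1)+n+1)*(6*((m:ℚ)+1)+7))) * H1
    + (14*((n:ℚ)+1)*(6*((m:ℚ)+1)+1)) * H2
    + (14*((m:ℚ)+1)*(2*((m:ℚ)+1)+1)*((n:ℚ)+1)*(6*((m:ℚ)+1)+7)) * H3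
    + (-(108*(((m:ℚ)+1)+n)*28*((m:ℚ)+1)*(2*((m:ℚ)+1)+1)*((n:ℚ)+1)*(((m:ℚ)+1)+n+1)*(6*((m:ℚ)+1)+7))) * H0
    + (2*(2*((m:ℚ)+1)+1)*(((m:ℚ)+1)+n)*pref (m+1) n) * hPF

lemma six_sub_ne (m : ℕ) : (6*(m:ℚ)-1) ≠ 0 := by
  intro h0
  have h1 : ((6*m : ℕ):ℚ) = 1 := by push_cast; linarith
  norm_cast at h1
  omega

lemma gQ_A1 (m : ℕ) : gQ m 0 * (6*(m:ℚ)-1) = pref m 0 := by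
  have e : (1:ℚ) / (6*(m:ℚ)-1) * (6*(m:ℚ)-1) = 1 := div_mul_cancel₀ _ (six_sub_ne m)
  rw [gQ, Bval_zero, bSeq_zero]
  linear_combination pref m 0 * e

lemma gQ_A2 (n : ℕ) : gQ 1 n * 5 = pref 1 n * (5*Bval n 1 + bSeq n) := by
  rw [gQ]
  norm_num
  ring

lemma gQ_A3 (m n : ℕ) : gQ (m+1) n * (6*((m:ℚ)+1)-1)
    = pref (m+1) n * ((6*((m:ℚ)+1)-1)*Bval n ((m:ℚ)+1) + bSeq n) := by
  have e : bSeq n / (6*((m:ℚ)+1)-1) * (6*((m:ℚ)+1)-1) = bSeq n :=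
    div_mul_cancel₀ _ (by intro h0; linarith [show (0:ℚ) ≤ (m:ℚ) from Nat.cast_nonneg m])
  rw [gQ]
  push_cast
  linear_combination pref (m+1) n * e

lemma gQ_A0 (m n : ℕ) : gQ m n * (6*(m:ℚ)-1)
    = pref m n * ((6*(m:ℚ)-1)*Bval n (m:ℚ) + bSeq n) := by
  have e : bSeq n / (6*(m:ℚ)-1) * (6*(m:ℚ)-1) = bSeq n := div_mul_cancel₀ _ (six_sub_ne m)
  rw [gQ]
  linear_combination pref m n * e

lemma IGq (m n : ℕ) :
    gQ (m+1) 0 * gQ 1 n + gQ (m+2) n + gQ (m+1) (n+1)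
      = 108*((m:ℚ)+1+n)*gQ (m+1) n := by
  have hW : (20*((m:ℚ)+1)*(2*((m:ℚ)+1)+1)*((n:ℚ)+1)*(((m:ℚ)+1)+n+1)*(6*(m:ℚ)+5)*(6*(m:ℚ)+11)) ≠ 0 := by positivity
  refine mul_right_cancel₀ hW ?_
  have H1 : gQ (m+1) 0 * gQ 1 n * (10*((m:ℚ)+1)*((n:ℚ)+1)*(6*(m:ℚ)+5))
      = pref (m+1) n * (105*(((m:ℚ)+1)+n)*(5*Bval n 1 + bSeq n)) := by
    have hA1 := gQ_A1 (m+1)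
    have hF3 := pref_F3 (m+1) n
    push_cast at hA1 hF3
    linear_combination (gQ 1 n * 10*((m:ℚ)+1)*((n:ℚ)+1)) * hA1
      + (pref (m+1) 0 * 2*((m:ℚ)+1)*((n:ℚ)+1)) * gQ_A2 n
      + (5*Bval n 1 + bSeq n) * hF3
  have H2 : gQ (m+2) n * (2*((m:ℚ)+1)*(((m:ℚ)+1)+n+1)*(2*((m:ℚ)+1)+1)*(6*(m:ℚ)+11))
      = pref (m+1) n * (3*(2*((m:ℚ)+1)+1)*(6*((m:ℚ)+1)+5)*(6*((m:ℚ)+1)+7)*(((m:ℚ)+1)+n)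
          *((6*(m:ℚ)+11)*Bval n (((m:ℚ)+1)+1) + bSeq n)) := by
    have hA3 := gQ_A3 (m+1) n
    have hF2 := pref_F2 (m+1) n
    push_cast at hA3 hF2
    linear_combination (2*(((m:ℚ)+1)+n+1)*((m:ℚ)+1)*(2*((m:ℚ)+1)+1)) * hA3
      + ((6*(m:ℚ)+11)*Bval n (((m:ℚ)+1)+1) + bSeq n) * hF2
  have H3 : gQ (m+1) (n+1) * (2*(((m:ℚ)+1)+n+1)*(6*(m:ℚ)+5))
      = pref (m+1) n * ((((m:ℚ)+1)+n)
          *((6*(m:ℚ)+5)*(18*bSeq n + 108*(((m:ℚ)+1)+n+1)*Bval n ((m:ℚ)+1)) + bSeq (n+1))) := by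
    have hA4 := gQ_A0 (m+1) (n+1)
    rw [Bval_succ] at hA4
    have hF1 := pref_F1 (m+1) n
    push_cast at hA4 hF1
    linear_combination (2*(((m:ℚ)+1)+n+1)) * hA4
      + ((6*(m:ℚ)+5)*(18*bSeq n + 108*(((m:ℚ)+1)+n+1)*Bval n ((m:ℚ)+1)) + bSeq (n+1)) * hF1
  have H0 := gQ_A0 (m+1) n
  have hPG := PG n ((m:ℚ)+1)
  push_cast at H0 ⊢
  linear_combination ((2*(2*((m:ℚ)+1)+1)*(((m:ℚ)+1)+n+1)*(6*(m:ℚ)+11))) * H1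
    + (10*((n:ℚ)+1)*(6*(m:ℚ)+5)) * H2
    + (10*((m:ℚ)+1)*(2*((m:ℚ)+1)+1)*((n:ℚ)+1)*(6*(m:ℚ)+11)) * H3
    + (-(108*(((m:ℚ)+1)+n)*20*((m:ℚ)+1)*(2*((m:ℚ)+1)+1)*((n:ℚ)+1)*(((m:ℚ)+1)+n+1)*(6*(m:ℚ)+11))) * H0
    + (2*(2*((m:ℚ)+1)+1)*(((m:ℚ)+1)+n)*pref (m+1) n) * hPG


lemma Fcoef_cast (s : ℂ) (m n : ℕ) :
    Fcoef s m n = (-1)^n * (-s/144)^(m+n) * ((fQ m n : ℚ) : ℂ) := by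
  rw [Fcoef, fQ, pref]
  push_cast
  ring

lemma Gcoef_cast (s : ℂ) (m n : ℕ) :
    Gcoef s m n = (-1)^(n+1) * (-s/144)^(m+n) * ((gQ m n : ℚ) : ℂ) := by
  rw [Gcoef, gQ, pref]
  push_cast
  ring

lemma Acoef_F1 (s : ℂ) (p q : ℤ) (hp : 0 ≤ p) (hq : 0 ≤ q) (h1 : p % 3 = 2) (h2 : q % 3 = 0) :
    Acoef s p q = Fcoef s ((p+1)/3).toNat (q/3).toNat := by
  rw [Acoef, if_neg (by omega), if_pos ⟨h1, h2⟩]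

lemma Acoef_F2 (s : ℂ) (p q : ℤ) (hp : 0 ≤ p) (hq : 0 ≤ q) (h1 : p % 3 = 0) (h2 : q % 3 = 2) :
    Acoef s p q = Fcoef s ((p/3).toNat + 1) ((q-2)/3).toNat := by
  rw [Acoef, if_neg (by omega), if_neg (by omega), if_pos ⟨h1, h2⟩]

lemma Acoef_G (s : ℂ) (p q : ℤ) (hp : 0 ≤ p) (hq : 0 ≤ q) (h1 : p % 3 = 1) (h2 : q % 3 = 1) :
    Acoef s p q = Gcoef s ((p+2)/3).toNat ((q-1)/3).toNat := by
  rw [Acoef, if_neg (by omega), if_neg (by omega), if_neg (by omega), if_pos ⟨h1, h2⟩]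

lemma Acoef_zero (s : ℂ) (p q : ℤ) (h : (p+q) % 3 ≠ 2) : Acoef s p q = 0 := by
  rw [Acoef]
  split_ifs with h1 h2 h3 h4 <;> first | rfl | omega

/-- The `L_0` constraints:
`√−2·(−Σ_{i=0}^{2} A_{m,i}A_{2−i,n} + A_{m+3,n} − A_{m,n+3})
 − (1/4)·((2m+1)+(2n+1))·A_{m,n} = 0` for all `m, n ≥ 0`. -/
theorem stmt15 (s : ℂ) (hs : s^2 = -2) (m n : ℕ) :
    s * (-(∑ i ∈ Finset.range 3, Acoef s m i * Acoef s (2-(i:ℤ)) n)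
          + Acoef s ((m:ℤ)+3) n - Acoef s m ((n:ℤ)+3))
      - (1/4 : ℂ) * ((2*(m:ℂ)+1) + (2*(n:ℂ)+1)) * Acoef s m n = 0 := by
  have hsu : s * (-s/144) = 1/72 := by linear_combination (-1/144 : ℂ) * hs
  have z := Acoef_zero s
  rw [Finset.sum_range_succ, Finset.sum_range_succ, Finset.sum_range_succ, Finset.sum_range_zero]
  obtain ⟨a, r, hr, rfl⟩ : ∃ a r, r < 3 ∧ m = 3*a + r := ⟨m/3, m%3, Nat.mod_lt _ (by norm_num), by omega⟩
  obtain ⟨b, t, ht, rfl⟩ : ∃ b t, t < 3 ∧ n = 3*b + t := ⟨n/3, n%3, Nat.mod_lt _ (by norm_num), by omega⟩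
  interval_cases r <;> interval_cases t <;> push_cast
  · -- r=0, t=0: zero class
    rw [z (3*(a:ℤ)+0) (3*(b:ℤ)+0) (by omega)]
    rw [z (3*(a:ℤ)+0+3) (3*(b:ℤ)+0) (by omega)]
    rw [z (3*(a:ℤ)+0) (3*(b:ℤ)+0+3) (by omega)]
    rw [z (3*(a:ℤ)+0) (0) (by omega)]
    rw [z (3*(a:ℤ)+0) (1) (by omega)]
    rw [z (0) (3*(b:ℤ)+0) (by omega)]
    ring
  · -- r=0, t=1: zero class
    rw [z (3*(a:ℤ)+0) (3*(b:ℤ)+1) (by omega)]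
    rw [z (3*(a:ℤ)+0+3) (3*(b:ℤ)+1) (by omega)]
    rw [z (3*(a:ℤ)+0) (3*(b:ℤ)+1+3) (by omega)]
    rw [z (3*(a:ℤ)+0) (0) (by omega)]
    rw [z (3*(a:ℤ)+0) (1) (by omega)]
    rw [z (0) (3*(b:ℤ)+1) (by omega)]
    ring
  · -- r=0, t=2: main class
    have hA : Acoef s (3*(a:ℤ)+0) (2) = Fcoef s (a+1) 0 := by
      have e1 : ((3*(a:ℤ)+0)/3).toNat + 1 = a+1 := by omega
      rw [Acoef_F2 s _ _ (by omega) (by omega) (by omega) (by omega), e1]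
      norm_num
    have hB : Acoef s (0) (3*(b:ℤ)+2) = Fcoef s 1 b := by
      have e2 : ((3*(b:ℤ)+2-2)/3).toNat = b := by omega
      rw [Acoef_F2 s _ _ (by omega) (by omega) (by omega) (by omega), e2]
      norm_num
    have hC : Acoef s (3*(a:ℤ)+0+3) (3*(b:ℤ)+2) = Fcoef s (a+2) b := by
      have e1 : ((3*(a:ℤ)+0+3)/3).toNat + 1 = a+2 := by omega
      have e2 : ((3*(b:ℤ)+2-2)/3).toNat = b := by omega
      rw [Acoef_F2 s _ _ (by omega) (by omega) (by omega) (by omega), e1, e2]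
    have hD : Acoef s (3*(a:ℤ)+0) (3*(b:ℤ)+2+3) = Fcoef s (a+1) (b+1) := by
      have e1 : ((3*(a:ℤ)+0)/3).toNat + 1 = a+1 := by omega
      have e2 : ((3*(b:ℤ)+2+3-2)/3).toNat = b+1 := by omega
      rw [Acoef_F2 s _ _ (by omega) (by omega) (by omega) (by omega), e1, e2]
    have hE : Acoef s (3*(a:ℤ)+0) (3*(b:ℤ)+2) = Fcoef s (a+1) b := by
      have e1 : ((3*(a:ℤ)+0)/3).toNat + 1 = a+1 := by omega
      have e2 : ((3*(b:ℤ)+2-2)/3).toNat = b := by omega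
      rw [Acoef_F2 s _ _ (by omega) (by omega) (by omega) (by omega), e1, e2]
    rw [hA, hB, hC, hD, hE, z (3*(a:ℤ)+0) (0) (by omega), z (3*(a:ℤ)+0) (1) (by omega)]
    have hq := IFq a b
    have hc := congrArg (fun q : ℚ => (q:ℂ)) hq
    push_cast at hc
    simp only [Fcoef_cast]
    linear_combination ((-1)^b*s*(-s/144)^(a+b+2)) * hc
      + ((-1)^b*(108:ℂ)*((a:ℂ)+1+(b:ℂ))*((fQ (a+1) b : ℚ):ℂ)*(-s/144)^(a+b+1)) * hsu
  · -- r=1, t=0: zero class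
    rw [z (3*(a:ℤ)+1) (3*(b:ℤ)+0) (by omega)]
    rw [z (3*(a:ℤ)+1+3) (3*(b:ℤ)+0) (by omega)]
    rw [z (3*(a:ℤ)+1) (3*(b:ℤ)+0+3) (by omega)]
    rw [z (3*(a:ℤ)+1) (0) (by omega)]
    rw [z (1) (3*(b:ℤ)+0) (by omega)]
    rw [z (3*(a:ℤ)+1) (2) (by omega)]
    ring
  · -- r=1, t=1: main class
    have hA : Acoef s (3*(a:ℤ)+1) (1) = Gcoef s (a+1) 0 := by
      have e1 : ((3*(a:ℤ)+1+2)/3).toNat = a+1 := by omega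
      rw [Acoef_G s _ _ (by omega) (by omega) (by omega) (by omega), e1]
      norm_num
    have hB : Acoef s (1) (3*(b:ℤ)+1) = Gcoef s 1 b := by
      have e2 : ((3*(b:ℤ)+1-1)/3).toNat = b := by omega
      rw [Acoef_G s _ _ (by omega) (by omega) (by omega) (by omega), e2]
      norm_num
    have hC : Acoef s (3*(a:ℤ)+1+3) (3*(b:ℤ)+1) = Gcoef s (a+2) b := by
      have e1 : ((3*(a:ℤ)+1+3+2)/3).toNat = a+2 := by omega
      have e2 : ((3*(b:ℤ)+1-1)/3).toNat = b := by omega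
      rw [Acoef_G s _ _ (by omega) (by omega) (by omega) (by omega), e1, e2]
    have hD : Acoef s (3*(a:ℤ)+1) (3*(b:ℤ)+1+3) = Gcoef s (a+1) (b+1) := by
      have e1 : ((3*(a:ℤ)+1+2)/3).toNat = a+1 := by omega
      have e2 : ((3*(b:ℤ)+1+3-1)/3).toNat = b+1 := by omega
      rw [Acoef_G s _ _ (by omega) (by omega) (by omega) (by omega), e1, e2]
    have hE : Acoef s (3*(a:ℤ)+1) (3*(b:ℤ)+1) = Gcoef s (a+1) b := by
      have e1 : ((3*(a:ℤ)+1+2)/3).toNat = a+1 := by omega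
      have e2 : ((3*(b:ℤ)+1-1)/3).toNat = b := by omega
      rw [Acoef_G s _ _ (by omega) (by omega) (by omega) (by omega), e1, e2]
    rw [hA, hB, hC, hD, hE, z (3*(a:ℤ)+1) (0) (by omega), z (3*(a:ℤ)+1) (2) (by omega)]
    have hq := IGq a b
    have hc := congrArg (fun q : ℚ => (q:ℂ)) hq
    push_cast at hc
    simp only [Gcoef_cast]
    linear_combination ((-1)^(b+1)*s*(-s/144)^(a+b+2)) * hc
      + ((-1)^(b+1)*(108:ℂ)*((a:ℂ)+1+(b:ℂ))*((gQ (a+1) b : ℚ):ℂ)*(-s/144)^(a+b+1)) * hsu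
  · -- r=1, t=2: zero class
    rw [z (3*(a:ℤ)+1) (3*(b:ℤ)+2) (by omega)]
    rw [z (3*(a:ℤ)+1+3) (3*(b:ℤ)+2) (by omega)]
    rw [z (3*(a:ℤ)+1) (3*(b:ℤ)+2+3) (by omega)]
    rw [z (3*(a:ℤ)+1) (0) (by omega)]
    rw [z (1) (3*(b:ℤ)+2) (by omega)]
    rw [z (3*(a:ℤ)+1) (2) (by omega)]
    ring
  · -- r=2, t=0: main class
    have hA : Acoef s (3*(a:ℤ)+2) (0) = Fcoef s (a+1) 0 := by
      have e1 : ((3*(a:ℤ)+2+1)/3).toNat = a+1 := by omega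
      rw [Acoef_F1 s _ _ (by omega) (by omega) (by omega) (by omega), e1]
      norm_num
    have hB : Acoef s (2) (3*(b:ℤ)+0) = Fcoef s 1 b := by
      have e2 : ((3*(b:ℤ)+0)/3).toNat = b := by omega
      rw [Acoef_F1 s _ _ (by omega) (by omega) (by omega) (by omega), e2]
      norm_num
    have hC : Acoef s (3*(a:ℤ)+2+3) (3*(b:ℤ)+0) = Fcoef s (a+2) b := by
      have e1 : ((3*(a:ℤ)+2+3+1)/3).toNat = a+2 := by omega
      have e2 : ((3*(b:ℤ)+0)/3).toNat = b := by omega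
      rw [Acoef_F1 s _ _ (by omega) (by omega) (by omega) (by omega), e1, e2]
    have hD : Acoef s (3*(a:ℤ)+2) (3*(b:ℤ)+0+3) = Fcoef s (a+1) (b+1) := by
      have e1 : ((3*(a:ℤ)+2+1)/3).toNat = a+1 := by omega
      have e2 : ((3*(b:ℤ)+0+3)/3).toNat = b+1 := by omega
      rw [Acoef_F1 s _ _ (by omega) (by omega) (by omega) (by omega), e1, e2]
    have hE : Acoef s (3*(a:ℤ)+2) (3*(b:ℤ)+0) = Fcoef s (a+1) b := by
      have e1 : ((3*(a:ℤ)+2+1)/3).toNat = a+1 := by omega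
      have e2 : ((3*(b:ℤ)+0)/3).toNat = b := by omega
      rw [Acoef_F1 s _ _ (by omega) (by omega) (by omega) (by omega), e1, e2]
    rw [hA, hB, hC, hD, hE, z (3*(a:ℤ)+2) (1) (by omega), z (3*(a:ℤ)+2) (2) (by omega)]
    have hq := IFq a b
    have hc := congrArg (fun q : ℚ => (q:ℂ)) hq
    push_cast at hc
    simp only [Fcoef_cast]
    linear_combination ((-1)^b*s*(-s/144)^(a+b+2)) * hc
      + ((-1)^b*(108:ℂ)*((a:ℂ)+1+(b:ℂ))*((fQ (a+1) b : ℚ):ℂ)*(-s/144)^(a+b+1)) * hsu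
  · -- r=2, t=1: zero class
    rw [z (3*(a:ℤ)+2) (3*(b:ℤ)+1) (by omega)]
    rw [z (3*(a:ℤ)+2+3) (3*(b:ℤ)+1) (by omega)]
    rw [z (3*(a:ℤ)+2) (3*(b:ℤ)+1+3) (by omega)]
    rw [z (2) (3*(b:ℤ)+1) (by omega)]
    rw [z (3*(a:ℤ)+2) (1) (by omega)]
    rw [z (3*(a:ℤ)+2) (2) (by omega)]
    ring
  · -- r=2, t=2: zero class
    rw [z (3*(a:ℤ)+2) (3*(b:ℤ)+2) (by omega)]
    rw [z (3*(a:ℤ)+2+3) (3*(b:ℤ)+2) (by omega)]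
    rw [z (3*(a:ℤ)+2) (3*(b:ℤ)+2+3) (by omega)]
    rw [z (2) (3*(b:ℤ)+2) (by omega)]
    rw [z (3*(a:ℤ)+2) (1) (by omega)]
    rw [z (3*(a:ℤ)+2) (2) (by omega)]
    ring
end
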